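/- arXiv:1206.1166 — 2 statements merged into one kernel-verified Lean document; each statement's English description precedes it below -/
import Mathlib

section
/- For complex s with Re(s) > 1, ∑_{n=1}^∞ d(n)²/n^s = ζ(s)⁴/ζ(2s). -/
/-!
Write `F` for the arithmetic function `n ↦ μ(√n)` on perfect squares and `0` elsewhere, so
that `L(F, s) = L(μ, 2s) = 1/ζ(2s)`. Both `d²` and `F * ζ⁴` are multiplicative, so it suffices
to compare them at prime powers `p^k`. There convolution with `ζ` takes partial sums in `k`:
starting from `F(p^k) = 1, 0, -1, 0, 0, …`, four partial summations give `1, 1, 0, 0, …`, then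
`1, 2, 2, 2, …`, then `2k + 1`, and finally `(k + 1)² = d(p^k)²`.
-/

open ArithmeticFunction Finset LSeries LSeries.notation
open scoped ArithmeticFunction.Moebius ArithmeticFunction.zeta ArithmeticFunction.sigma

theorem Nat.Coprime.isSquare_mul_iff {m n : ℕ} (h : m.Coprime n) :
    IsSquare (m * n) ↔ IsSquare m ∧ IsSquare n := by
  refine ⟨fun ⟨c, hc⟩ => ?_, fun ⟨hm, hn⟩ => hm.mul hn⟩
  have hunit : IsUnit (gcd m n) := Nat.isUnit_iff.mpr h
  obtain ⟨a, rfl⟩ := exists_eq_pow_of_mul_eq_pow hunit (k := 2) (by rw [hc, sq])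
  obtain ⟨b, rfl⟩ := exists_eq_pow_of_mul_eq_pow (gcd_comm (a ^ 2) n ▸ hunit) (k := 2)
    (by rw [mul_comm, hc, sq])
  exact ⟨⟨a, sq a⟩, ⟨b, sq b⟩⟩

theorem Nat.Prime.isSquare_pow_iff {p k : ℕ} (hp : p.Prime) : IsSquare (p ^ k) ↔ Even k := by
  refine ⟨fun ⟨c, hc⟩ => ?_, fun ⟨i, hi⟩ => ⟨p ^ i, by rw [hi, pow_add]⟩⟩
  obtain ⟨i, -, rfl⟩ := (Nat.dvd_prime_pow hp).mp (Dvd.intro _ hc.symm)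
  exact ⟨i, Nat.pow_right_injective hp.two_le (hc.trans (pow_add p i i).symm)⟩

namespace ArithmeticFunction

variable {R : Type*}

def onSquares [Zero R] (f : ArithmeticFunction R) : ArithmeticFunction R :=
  ⟨fun n => if IsSquare n then f n.sqrt else 0, by simp⟩

section onSquares

variable [Zero R] (f : ArithmeticFunction R)

theorem onSquares_apply (n : ℕ) : f.onSquares n = if IsSquare n then f n.sqrt else 0 := rfl

@[simp]
theorem onSquares_apply_sq (m : ℕ) : f.onSquares (m ^ 2) = f m := by
  rw [onSquares_apply, if_pos ⟨m, sq m⟩, sq, Nat.sqrt_eq]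

theorem onSquares_apply_of_not_isSquare {n : ℕ} (hn : ¬IsSquare n) : f.onSquares n = 0 :=
  if_neg hn

theorem onSquares_apply_prime_pow {p : ℕ} (hp : p.Prime) (k : ℕ) :
    f.onSquares (p ^ k) = if Even k then f (p ^ (k / 2)) else 0 := by
  split_ifs with hk
  · obtain ⟨i, rfl⟩ := hk
    rw [← two_mul, pow_mul', onSquares_apply_sq, Nat.mul_div_cancel_left i two_pos]
  · exact f.onSquares_apply_of_not_isSquare (hp.isSquare_pow_iff.not.mpr hk)

end onSquares

theorem IsMultiplicative.onSquares [MonoidWithZero R] {f : ArithmeticFunction R}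
    (hf : f.IsMultiplicative) : f.onSquares.IsMultiplicative := by
  refine ⟨by simpa [hf.map_one] using f.onSquares_apply_sq 1, fun {m n} hmn => ?_⟩
  by_cases hsq : IsSquare m ∧ IsSquare n
  · obtain ⟨⟨a, rfl⟩, ⟨b, rfl⟩⟩ := hsq
    have hab : a.Coprime b :=
      Nat.Coprime.coprime_mul_left (Nat.Coprime.coprime_mul_left_right hmn)
    rw [← sq, ← sq, ← mul_pow, onSquares_apply_sq, onSquares_apply_sq, onSquares_apply_sq,
      hf.map_mul_of_coprime hab]
  · rw [onSquares_apply_of_not_isSquare _ (hmn.isSquare_mul_iff.not.mpr hsq)]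
    rcases not_and_or.mp hsq with h | h <;> simp [onSquares_apply_of_not_isSquare _ h]

theorem onSquares_moebius_apply_prime_pow [Ring R] {p : ℕ} (hp : p.Prime) (k : ℕ) :
    (μ : ArithmeticFunction R).onSquares (p ^ k) =
      if k = 0 then 1 else if k = 2 then -1 else 0 := by
  rw [onSquares_apply_prime_pow _ hp, intCoe_apply]
  obtain ⟨j, rfl | rfl⟩ := Nat.even_or_odd' k
  · rw [if_pos (even_two_mul j), Nat.mul_div_cancel_left j two_pos]
    rcases eq_or_ne j 0 with rfl | hj
    · simp
    rw [moebius_apply_prime_pow hp hj]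
    split_ifs <;> first | omega | simp
  · rw [if_neg (Nat.not_even_iff_odd.mpr (odd_two_mul_add_one j)), if_neg (by omega),
      if_neg (by omega)]

theorem mul_zeta_apply_prime_pow [Semiring R] (f : ArithmeticFunction R) {p : ℕ} (hp : p.Prime)
    (k : ℕ) : (f * ζ) (p ^ k) = ∑ i ∈ range (k + 1), f (p ^ i) := by
  rw [coe_mul_zeta_apply, Nat.sum_divisors_prime_pow hp]

theorem sigma_zero_pmul_self_eq [CommRing R] :
    (σ 0 : ArithmeticFunction R).pmul (σ 0) = (μ : ArithmeticFunction R).onSquares * ζ ^ 4 := by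
  refine (IsMultiplicative.eq_iff_eq_on_prime_powers _
    (isMultiplicative_sigma.natCast.pmul isMultiplicative_sigma.natCast) _
    (isMultiplicative_moebius.intCast.onSquares.mul isMultiplicative_zeta.natCast.pow)).mpr
    fun p k hp => ?_
  have h0 (k : ℕ) := onSquares_moebius_apply_prime_pow (R := R) hp k
  set F := (μ : ArithmeticFunction R).onSquares
  have h1 (k : ℕ) : (F * ζ) (p ^ k) = if k ≤ 1 then 1 else 0 := by
    rw [mul_zeta_apply_prime_pow _ hp]
    induction k with
    | zero => rw [sum_range_one, h0]; simp
    | succ k ih =>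
      rw [sum_range_succ, ih, h0]
      split_ifs <;> first | omega | contradiction | norm_num
  have h2 (k : ℕ) : (F * ζ ^ 2) (p ^ k) = if k = 0 then 1 else 2 := by
    rw [pow_succ, pow_one, ← mul_assoc, mul_zeta_apply_prime_pow _ hp]
    induction k with
    | zero => rw [sum_range_one, h1]; simp
    | succ k ih =>
      rw [sum_range_succ, ih, h1]
      split_ifs <;> first | omega | contradiction | norm_num
  have h3 (k : ℕ) : (F * ζ ^ 3) (p ^ k) = 2 * k + 1 := by
    rw [pow_succ, ← mul_assoc, mul_zeta_apply_prime_pow _ hp]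
    induction k with
    | zero => rw [sum_range_one, h2]; simp
    | succ k ih => rw [sum_range_succ, ih, h2, if_neg k.succ_ne_zero]; push_cast; ring
  have h4 (k : ℕ) : (F * ζ ^ 4) (p ^ k) = (k + 1) ^ 2 := by
    rw [pow_succ, ← mul_assoc, mul_zeta_apply_prime_pow _ hp]
    induction k with
    | zero => rw [sum_range_one, h3]; simp
    | succ k ih => rw [sum_range_succ, ih, h3]; push_cast; ring
  rw [pmul_apply, natCoe_apply, sigma_zero_apply_prime_pow hp, h4]
  push_cast
  ring

theorem LSeriesHasSum_onSquares_iff {f : ArithmeticFunction ℂ} {s a : ℂ} :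
    LSeriesHasSum ↗f.onSquares s a ↔ LSeriesHasSum ↗f (2 * s) a := by
  have hsupp : ∀ n ∉ Set.range (· ^ 2 : ℕ → ℕ), term (↗f.onSquares) s n = 0 := by
    intro n hn
    have hsq : ¬IsSquare n := fun ⟨r, hr⟩ => hn ⟨r, (sq r).trans hr.symm⟩
    simp [term_def, onSquares_apply_of_not_isSquare _ hsq]
  rw [LSeriesHasSum, LSeriesHasSum,
    ← (Nat.pow_left_injective two_ne_zero).hasSum_iff hsupp]
  congr! 1
  funext m
  rcases eq_or_ne m 0 with rfl | hm
  · simp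
  rw [Function.comp_apply, term_of_ne_zero (pow_ne_zero 2 hm), term_of_ne_zero hm,
    onSquares_apply_sq, Nat.cast_pow, sq, Complex.natCast_mul_natCast_cpow,
    Complex.cpow_ofNat_mul, sq]

theorem LSeriesHasSum_moebius {s : ℂ} (hs : 1 < s.re) :
    LSeriesHasSum ↗μ s (riemannZeta s)⁻¹ := by
  have h := LSeries_zeta_mul_Lseries_moebius hs
  rw [LSeries_zeta_eq_riemannZeta hs] at h
  exact eq_inv_of_mul_eq_one_right h ▸ (LSeriesSummable_moebius_iff.mpr hs).LSeriesHasSum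

theorem LSeriesHasSum_pow {f : ArithmeticFunction ℂ} {s a : ℂ} (hf : LSeriesHasSum ↗f s a)
    (n : ℕ) : LSeriesHasSum ↗(f ^ n) s (a ^ n) := by
  induction n with
  | zero =>
    rw [pow_zero, pow_zero, one_eq_delta, LSeriesHasSum, funext (term_delta s)]
    exact hasSum_ite_eq 1 1
  | succ n ih => rw [pow_succ, pow_succ]; exact LSeriesHasSum_mul ih hf

end ArithmeticFunction

theorem LSeriesHasSum.hasSum_pnat {f : ℕ → ℂ} {s a : ℂ} (h : LSeriesHasSum f s a) :
    HasSum (fun n : ℕ+ => f n / (n : ℕ) ^ s) a := by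
  have hsupp : ∀ n ∉ Set.range ((↑) : ℕ+ → ℕ), term f s n = 0 := by
    intro n hn
    obtain rfl : n = 0 := by_contra fun h => hn ⟨⟨n, Nat.pos_of_ne_zero h⟩, rfl⟩
    exact term_zero f s
  convert (PNat.coe_injective.hasSum_iff hsupp).mpr h using 1
  funext n
  exact (term_of_ne_zero n.ne_zero f s).symm

theorem divisor_squared_dirichlet_series (s : ℂ) (hs : 1 < s.re) :
    ∑' n : ℕ+, (((n : ℕ).divisors.card : ℂ) ^ 2 / (n : ℕ) ^ s) =
      riemannZeta s ^ 4 / riemannZeta (2 * s) := by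
  have hs2 : 1 < (2 * s).re := by
    simp only [Complex.mul_re, Complex.re_ofNat, Complex.im_ofNat]
    linarith
  have hμ : LSeriesHasSum ↗(μ : ArithmeticFunction ℂ) (2 * s) (riemannZeta (2 * s))⁻¹ := by
    simpa only [intCoe_apply] using LSeriesHasSum_moebius hs2
  have hζ : LSeriesHasSum ↗(ζ : ArithmeticFunction ℂ) s (riemannZeta s) := by
    simpa only [natCoe_apply] using LSeriesHasSum_zeta hs
  have hsum : LSeriesHasSum ↗((σ 0 : ArithmeticFunction ℂ).pmul (σ 0)) s
      (riemannZeta s ^ 4 / riemannZeta (2 * s)) := by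
    rw [sigma_zero_pmul_self_eq, div_eq_inv_mul]
    exact LSeriesHasSum_mul (LSeriesHasSum_onSquares_iff.mpr hμ) (LSeriesHasSum_pow hζ 4)
  rw [← hsum.hasSum_pnat.tsum_eq]
  refine tsum_congr fun n => ?_
  rw [pmul_apply, natCoe_apply, sigma_zero_apply, sq]
end

section
/- For every real x > 0, e^{−x} − 2e^{−2x} = ∑_{n=1}^∞ μ(n)/(e^{xn} + 1), where μ is the Möbius function and the series converges absolutely. -/
/-!
Expanding `qⁿ/(1 - qⁿ)` as a geometric series turns a Lambert series `∑ f(n) qⁿ/(1 - qⁿ)` with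
bounded coefficients into an absolutely convergent double series `∑ f(a) q^(ab)`; grouping it
by `m = ab` gives `∑ (f * ζ)(m) qᵐ`. Since `μ * ζ = 1`, the Möbius Lambert series sums to `q`.
With `q = e^(-x)`, the identity `1/(eʸ + 1) = 1/(eʸ - 1) - 2/(e^(2y) - 1)` writes the series of
the theorem as the Möbius Lambert series at `q` minus twice the one at `q²`, that is `q - 2q²`.
-/

open ArithmeticFunction
open scoped ArithmeticFunction.zeta

lemma hasSum_pnat_geometric {K : Type*} [NormedDivisionRing K] {r : K} (hr : ‖r‖ < 1) :
    HasSum (fun n : ℕ+ => r ^ (n : ℕ)) (r * (1 - r)⁻¹) := by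
  rw [hasSum_pnat_iff_hasSum_succ]
  simpa [pow_succ'] using (hasSum_geometric_of_norm_lt_one hr).mul_left r

section LambertSeries

variable {𝕜 : Type*} [NontriviallyNormedField 𝕜] [CompleteSpace 𝕜]
  {f : ArithmeticFunction 𝕜} {C : ℝ} {q : 𝕜}

lemma summable_lambert_double_series (hf : ∀ n, ‖f n‖ ≤ C) (hq : ‖q‖ < 1) :
    Summable fun c : ℕ+ × ℕ+ => f c.1 * q ^ (c.1 * c.2 : ℕ) := by
  refine Summable.of_norm_bounded ((summable_prod_mul_pow 0 (r := ‖q‖) (by simpa)).mul_left C) ?_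
  intro c
  simp only [norm_mul, norm_pow, pow_zero, one_mul]
  gcongr
  exact hf _

lemma tsum_lambert_double_series_eq (hf : ∀ n, ‖f n‖ ≤ C) (hq : ‖q‖ < 1) :
    ∑' c : ℕ+ × ℕ+, f c.1 * q ^ (c.1 * c.2 : ℕ) = ∑' n : ℕ+, (f * ζ) n * q ^ (n : ℕ) := by
  set g : ℕ+ × ℕ+ → 𝕜 := fun c => f c.1 * q ^ (c.1 * c.2 : ℕ)
  have hsum : Summable (g ∘ sigmaAntidiagonalEquivProd) :=
    sigmaAntidiagonalEquivProd.summable_iff.mpr (summable_lambert_double_series hf hq)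
  calc ∑' c, g c = ∑' p, g (sigmaAntidiagonalEquivProd p) :=
        (sigmaAntidiagonalEquivProd.tsum_eq g).symm
    _ = ∑' n, ∑' d, g (sigmaAntidiagonalEquivProd ⟨n, d⟩) := hsum.tsum_sigma
    _ = _ := by
      refine tsum_congr fun n => ?_
      rw [tsum_fintype, Finset.univ_eq_attach, coe_mul_zeta_apply, Finset.sum_mul,
        ← Nat.sum_divisorsAntidiagonal (M := 𝕜) (fun a _ => f a * q ^ (n : ℕ)),
        ← Finset.sum_attach (n : ℕ).divisorsAntidiagonal]
      refine Finset.sum_congr rfl fun d _ => ?_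
      simp [g, sigmaAntidiagonalEquivProd, divisorsAntidiagonalFactors,
        (Nat.mem_divisorsAntidiagonal.mp d.2).1]

theorem hasSum_lambert_series (hf : ∀ n, ‖f n‖ ≤ C) (hq : ‖q‖ < 1) :
    HasSum (fun n : ℕ+ => f n * q ^ (n : ℕ) * (1 - q ^ (n : ℕ))⁻¹)
      (∑' n : ℕ+, (f * ζ) n * q ^ (n : ℕ)) := by
  rw [← tsum_lambert_double_series_eq hf hq]
  refine (summable_lambert_double_series hf hq).hasSum.prod_fiberwise fun a => ?_
  have hqa : ‖q ^ (a : ℕ)‖ < 1 := by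
    rw [norm_pow]
    exact pow_lt_one₀ (norm_nonneg _) hq a.ne_zero
  simpa [pow_mul, mul_assoc] using (hasSum_pnat_geometric hqa).mul_left (f a)

end LambertSeries

lemma norm_moebius_le_one {K : Type*} [NormedDivisionRing K] (n : ℕ) :
    ‖(moebius n : K)‖ ≤ 1 := by
  by_cases h : moebius n = 0
  · simp [h]
  · rcases moebius_ne_zero_iff_eq_or.mp h with h | h <;> simp [h]

theorem hasSum_moebius_lambert_series {𝕜 : Type*} [NontriviallyNormedField 𝕜]
    [CompleteSpace 𝕜] {q : 𝕜} (hq : ‖q‖ < 1) :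
    HasSum (fun n : ℕ+ => (moebius n : 𝕜) * q ^ (n : ℕ) * (1 - q ^ (n : ℕ))⁻¹) q := by
  have h := hasSum_lambert_series (f := (moebius : ArithmeticFunction 𝕜))
    (fun n => by simpa using norm_moebius_le_one n) hq
  rw [coe_moebius_mul_coe_zeta, tsum_eq_single 1 fun n hn => by simp [hn]] at h
  simpa using h

lemma div_inv_add_one_eq_sub {K : Type*} [Field K] {a r : K} (hr : r ≠ 0) (hr2 : r ^ 2 ≠ 1) :
    a / (r⁻¹ + 1) = a * r * (1 - r)⁻¹ - 2 * (a * r ^ 2 * (1 - r ^ 2)⁻¹) := by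
  have h1 : 1 - r ≠ 0 := fun h => hr2 (by rw [← sub_eq_zero.mp h]; ring)
  have h2 : 1 + r ≠ 0 := fun h => hr2 (by rw [eq_neg_of_add_eq_zero_right h]; ring)
  have h3 : 1 - r ^ 2 ≠ 0 := sub_ne_zero.mpr hr2.symm
  field_simp
  ring

theorem lambert_moebius_exp_plus (x : ℝ) (hx : 0 < x) :
    Summable (fun n : ℕ+ => |(moebius (n : ℕ) : ℝ) / (Real.exp (x * n) + 1)|) ∧
    ∑' n : ℕ+, (moebius (n : ℕ) : ℝ) / (Real.exp (x * n) + 1) =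
      Real.exp (-x) - 2 * Real.exp (-2 * x) := by
  set q := Real.exp (-x)
  have hq0 : 0 < q := Real.exp_pos _
  have hq1 : q < 1 := Real.exp_lt_one_iff.mpr (neg_neg_of_pos hx)
  have hq : ‖q‖ < 1 := by rwa [Real.norm_of_nonneg hq0.le]
  have hq2 : ‖q ^ 2‖ < 1 := by
    rw [norm_pow]
    exact pow_lt_one₀ (norm_nonneg _) hq two_ne_zero
  have hexp (n : ℕ) : Real.exp (x * n) = (q ^ n)⁻¹ := by
    rw [← Real.exp_nat_mul, ← Real.exp_neg]
    ring_nf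
  have hterm (n : ℕ+) : (moebius (n : ℕ) : ℝ) / (Real.exp (x * n) + 1) =
      moebius n * q ^ (n : ℕ) * (1 - q ^ (n : ℕ))⁻¹ -
        2 * (moebius n * (q ^ 2) ^ (n : ℕ) * (1 - (q ^ 2) ^ (n : ℕ))⁻¹) := by
    rw [hexp, pow_right_comm q 2]
    exact div_inv_add_one_eq_sub (by positivity)
      (pow_lt_one₀ (by positivity) (pow_lt_one₀ hq0.le hq1 n.ne_zero) two_ne_zero).ne
  have hsum := (hasSum_moebius_lambert_series hq).sub
    ((hasSum_moebius_lambert_series hq2).mul_left 2)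
  rw [← funext hterm] at hsum
  -- in `ℝ`, unconditional summability already gives absolute summability
  refine ⟨hsum.summable.abs, ?_⟩
  rw [hsum.tsum_eq, ← Real.exp_nat_mul]
  ring_nf
end
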